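/- For every tree T with at least one edge, γ_pr(T) = 2ρ_3(T): the paired domination number of a tree equals twice its 3-packing number. -/

import Mathlib

set_option linter.unusedVariables false
set_option linter.unnecessarySeqFocus false

open SimpleGraph

variable {V : Type*} {W : Type*}

/-- The direct (tensor) product of two simple graphs. -/
def SimpleGraph.tensor (G : SimpleGraph V) (H : SimpleGraph W) : SimpleGraph (V × W) where
  Adj p q := G.Adj p.1 q.1 ∧ H.Adj p.2 q.2
  symm := ⟨fun p q h => ⟨h.1.symm, h.2.symm⟩⟩
  loopless := ⟨fun p h => G.irrefl h.1⟩

/-- A dominating set: every vertex is in `D` or adjacent to a member of `D`. -/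
def SimpleGraph.Dominating (G : SimpleGraph V) (D : Set V) : Prop :=
  ∀ v, ∃ u ∈ D, u = v ∨ G.Adj u v

/-- The domination number. -/
noncomputable def SimpleGraph.domNum (G : SimpleGraph V) : ℕ :=
  sInf {n | ∃ D : Set V, G.Dominating D ∧ D.ncard = n}

/-- A total dominating set. -/
def SimpleGraph.TotalDominating (G : SimpleGraph V) (D : Set V) : Prop :=
  ∀ v, ∃ u ∈ D, G.Adj u v

/-- The total domination number. -/
noncomputable def SimpleGraph.totalDomNum (G : SimpleGraph V) : ℕ :=
  sInf {n | ∃ D : Set V, G.TotalDominating D ∧ D.ncard = n}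

/-- A paired dominating set: dominating and the induced subgraph has a perfect matching. -/
def SimpleGraph.PairedDominating (G : SimpleGraph V) (D : Set V) : Prop :=
  G.Dominating D ∧ ∃ M : (G.induce D).Subgraph, M.IsPerfectMatching

/-- The paired domination number. -/
noncomputable def SimpleGraph.pairedDomNum (G : SimpleGraph V) : ℕ :=
  sInf {n | ∃ D : Set V, G.PairedDominating D ∧ D.ncard = n}

/-- A 3-packing: vertices pairwise at distance greater than 3. -/
def SimpleGraph.Packing3 (G : SimpleGraph V) (P : Set V) : Prop :=
  P.Pairwise fun u v => ¬G.Reachable u v ∨ 3 < G.dist u v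

/-- The 3-packing number. -/
noncomputable def SimpleGraph.packNum3 (G : SimpleGraph V) : ℕ :=
  sSup {n | ∃ P : Set V, G.Packing3 P ∧ P.ncard = n}

/-- A minimal dominating set. -/
def SimpleGraph.MinimalDominating (G : SimpleGraph V) (D : Set V) : Prop :=
  G.Dominating D ∧ ∀ D' ⊆ D, G.Dominating D' → D' = D

/-- The upper domination number. -/
noncomputable def SimpleGraph.upperDomNum (G : SimpleGraph V) : ℕ :=
  sSup {n | ∃ D : Set V, G.MinimalDominating D ∧ D.ncard = n}

/-- `G` has no isolated vertices. -/
def SimpleGraph.NoIsolated (G : SimpleGraph V) : Prop := ∀ v, ∃ u, G.Adj u v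

/-- Direct product of complete graphs `K_{n 0} × ... × K_{n (t-1)}`:
tuples adjacent iff they differ in every coordinate. -/
def prodCompleteGraphs {t : ℕ} (n : Fin t → ℕ) : SimpleGraph (∀ i, Fin (n i)) where
  Adj a b := a ≠ b ∧ ∀ i, a i ≠ b i
  symm := ⟨fun a b h => ⟨h.1.symm, fun i => (h.2 i).symm⟩⟩
  loopless := ⟨fun a h => h.1 rfl⟩

/-- `G` together with a new pendant vertex (`none`) attached to `v`. -/
def addPendant (G : SimpleGraph V) (v : V) : SimpleGraph (Option V) where
  Adj x y :=
    match x, y with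
    | some a, some b => G.Adj a b
    | some a, none => a = v
    | none, some b => b = v
    | none, none => False
  symm := by
    constructor
    rintro (_ | a) (_ | b) h <;> simp_all [SimpleGraph.adj_comm]
  loopless := by
    constructor
    rintro (_ | a) h <;> simp_all

/-- `G` with a path on `ℓ` vertices appended to vertex `u` via a bridge. -/
def appendPath (G : SimpleGraph V) (u : V) (ℓ : ℕ) : SimpleGraph (V ⊕ Fin ℓ) where
  Adj x y :=
    match x, y with
    | Sum.inl a, Sum.inl b => G.Adj a b
    | Sum.inl a, Sum.inr j => a = u ∧ (j : ℕ) = 0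
    | Sum.inr i, Sum.inl b => b = u ∧ (i : ℕ) = 0
    | Sum.inr i, Sum.inr j => (i : ℕ) + 1 = j ∨ (j : ℕ) + 1 = i
  symm := by
    constructor
    rintro (a | i) (b | j) h <;> simp_all [SimpleGraph.adj_comm] <;> tauto
  loopless := by
    constructor
    rintro (a | i) h <;> simp_all

/-- `G` with a pendant path on two vertices `(v,1)–(v,2)` attached to each vertex `(v,0)`. -/
def attachPaths2 (G : SimpleGraph V) : SimpleGraph (V × Fin 3) where
  Adj p q :=
    (p.2 = 0 ∧ q.2 = 0 ∧ G.Adj p.1 q.1) ∨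
    (p.1 = q.1 ∧ ((p.2 = 0 ∧ q.2 = 1) ∨ (p.2 = 1 ∧ q.2 = 0) ∨
      (p.2 = 1 ∧ q.2 = 2) ∨ (p.2 = 2 ∧ q.2 = 1)))
  symm := by
    constructor
    rintro ⟨a, i⟩ ⟨b, j⟩ h <;> simp_all [SimpleGraph.adj_comm] <;> tauto
  loopless := by
    constructor
    rintro ⟨a, i⟩ h
    rcases h with ⟨-, -, h⟩ | ⟨-, h⟩
    · exact G.irrefl h
    · rcases h with ⟨h1, h2⟩ | ⟨h1, h2⟩ | ⟨h1, h2⟩ | ⟨h1, h2⟩ <;> simp_all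
/-!
The lower bound holds in every graph: give each vertex `x` of a 3-packing a dominator in `D`,
together with that dominator's partner in the perfect matching. These `2|P|` vertices are
distinct, because a coincidence would put two packing vertices within distance 3.

For the upper bound, root the tree and run a greedy procedure. Take an undominated vertex `v` of
maximal depth and put it in the packing. Add to `D` the edge from its parent `p` to the parent of
`p`, or the edge `vp` if that grandparent is missing or already in `D`. Every vertex that is still
undominated is no deeper than `v`, and neither `p` nor its parent dominates it. In a tree this puts
it at distance more than 3 from `v`. So each round adds one packing vertex and two matched
dominators, and the procedure ends with `|D| = 2|P|`.
-/

namespace SimpleGraph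

variable {G T : SimpleGraph V}

/-- A perfect matching of `G.induce D`, encoded as an involution `σ` of `D` sending each vertex
to its partner. -/
def IsPairing (G : SimpleGraph V) (D : Set V) (σ : V → V) : Prop :=
  ∀ x ∈ D, σ x ∈ D ∧ G.Adj x (σ x) ∧ σ (σ x) = x

theorem exists_isPerfectMatching_induce_iff {D : Set V} :
    (∃ M : (G.induce D).Subgraph, M.IsPerfectMatching) ↔ ∃ σ, G.IsPairing D σ := by
  classical
  constructor
  · rintro ⟨M, hM⟩
    choose τ hτ hτ_unique using Subgraph.isPerfectMatching_iff.mp hM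
    refine ⟨fun x => if hx : x ∈ D then τ ⟨x, hx⟩ else x, fun x hx => ?_⟩
    have hinv : τ (τ ⟨x, hx⟩) = ⟨x, hx⟩ := (hτ_unique _ _ (M.adj_symm (hτ _))).symm
    simp only [dif_pos hx, dif_pos (τ ⟨x, hx⟩).2, Subtype.coe_eta]
    exact ⟨(τ _).2, M.adj_sub (hτ ⟨x, hx⟩), congrArg Subtype.val hinv⟩
  · rintro ⟨σ, hσ⟩
    let H : SimpleGraph D := fromRel fun c d => (d : V) = σ c
    have hH : H ≤ G.induce D := by
      rintro c d ⟨-, h | h⟩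
      · simpa [h] using (hσ c c.2).2.1
      · simpa [h] using (hσ d d.2).2.1.symm
    refine ⟨G.induce D |>.toSubgraph H hH, Subgraph.isPerfectMatching_iff.mpr fun c => ?_⟩
    refine ⟨⟨σ c, (hσ c c.2).1⟩, ⟨fun h => (hσ c c.2).2.1.ne (congrArg Subtype.val h),
      Or.inl rfl⟩, ?_⟩
    rintro d ⟨-, h | h⟩
    · exact Subtype.ext h
    · exact Subtype.ext (by simp only [h, (hσ d d.2).2.2])

theorem IsPairing.insert_insert {D : Set V} {σ : V → V} {a b : V} [DecidableEq V]
    (hσ : G.IsPairing D σ) (hab : G.Adj a b) (ha : a ∉ D) (hb : b ∉ D) :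
    G.IsPairing (insert a (insert b D)) fun x => if x = a then b else if x = b then a else σ x := by
  have hba : b ≠ a := hab.ne.symm
  rintro x (rfl | rfl | hx)
  · simp [hab, hba]
  · simp [hab.symm, hba]
  · have hxa : x ≠ a := fun h => ha (h ▸ hx)
    have hxb : x ≠ b := fun h => hb (h ▸ hx)
    obtain ⟨hσx, hadj, hinv⟩ := hσ x hx
    have hσa : σ x ≠ a := fun h => ha (h ▸ hσx)
    have hσb : σ x ≠ b := fun h => hb (h ▸ hσx)
    simp [hxa, hxb, hσa, hσb, hσx, hadj, hinv]

theorem Packing3.eq_of_edist_le {P : Set V} (hP : G.Packing3 P) {x y : V} (hx : x ∈ P)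
    (hy : y ∈ P) (h : G.edist x y ≤ 3) : x = y := by
  by_contra hxy
  have hreach : G.Reachable x y := edist_ne_top_iff_reachable.mp (ne_top_of_le_ne_top (by simp) h)
  rcases hP hx hy hxy with h' | h'
  · exact h' hreach
  · rw [← hreach.coe_dist_eq_edist] at h
    exact_mod_cast h.not_gt (by exact_mod_cast h')

theorem Packing3.two_mul_ncard_le {P D : Set V} (hP : G.Packing3 P) (hD : G.PairedDominating D)
    (hDfin : D.Finite) : 2 * P.ncard ≤ D.ncard := by
  obtain ⟨hdom, hmatch⟩ := hD
  obtain ⟨σ, hσ⟩ := exists_isPerfectMatching_induce_iff.mp hmatch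
  choose u hu hux using hdom
  have hdist_u : ∀ x, G.edist x (u x) ≤ 1 := fun x => by
    rw [edist_le_one_iff_adj_or_eq]; exact (hux x).symm.imp Adj.symm Eq.symm
  let f : V × Bool → V := fun p => cond p.2 (σ (u p.1)) (u p.1)
  have hf : ∀ p ∈ P ×ˢ (Set.univ : Set Bool), f p ∈ D := by
    rintro ⟨x, _ | _⟩ - <;> simp [f, hu, (hσ _ (hu x)).1]
  have hf_inj : Set.InjOn f (P ×ˢ Set.univ) := by
    rintro ⟨x, i⟩ ⟨hx, -⟩ ⟨y, j⟩ ⟨hy, -⟩ hfxy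
    have hclose : G.edist (u x) (u y) ≤ 1 := by
      rw [edist_le_one_iff_adj_or_eq]
      cases i <;> cases j <;> simp only [f, cond] at hfxy
      · exact Or.inr hfxy
      · exact Or.inl (hfxy ▸ (hσ _ (hu y)).2.1.symm)
      · exact Or.inl (hfxy ▸ (hσ _ (hu x)).2.1)
      · right; rw [← (hσ _ (hu x)).2.2, hfxy, (hσ _ (hu y)).2.2]
    have hxy : x = y := hP.eq_of_edist_le hx hy <| calc
      G.edist x y ≤ G.edist x (u x) + G.edist (u x) (u y) + G.edist (u y) y :=
        G.edist_triangle.trans (add_le_add_left G.edist_triangle _)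
      _ ≤ 1 + 1 + 1 := by gcongr; exacts [hdist_u x, edist_comm ▸ hdist_u y]
      _ = 3 := by norm_num
    subst hxy
    have hne : u x ≠ σ (u x) := (hσ _ (hu x)).2.1.ne
    cases i <;> cases j <;> simp_all [f]
  calc 2 * P.ncard = (P ×ˢ (Set.univ : Set Bool)).ncard := by
        rw [Set.ncard_prod, Set.ncard_univ, Nat.card_eq_fintype_card, Fintype.card_bool, mul_comm]
    _ ≤ D.ncard := Set.ncard_le_ncard_of_injOn f hf hf_inj hDfin

theorem exists_adj_dist_eq_of_dist_eq_add_one {x y : V} {k : ℕ} (h : G.dist x y = k + 1) :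
    ∃ m, G.Adj x m ∧ G.dist m y = k := by
  have hne : G.dist x y ≠ 0 := by omega
  obtain ⟨p, hp⟩ := (Reachable.of_dist_ne_zero hne).exists_walk_length_eq_dist
  have hnil : ¬p.Nil := Walk.not_nil_of_ne (dist_ne_zero_iff_ne_and_reachable.mp hne).1
  have hadj := p.adj_snd hnil
  have htail : G.dist p.snd y ≤ p.tail.length := dist_le p.tail
  have htri : G.dist x y ≤ G.dist x p.snd + G.dist p.snd y := hadj.reachable.dist_triangle_left y
  have hlen := p.length_tail_add_one hnil
  rw [dist_eq_one_iff_adj.mpr hadj] at htri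
  exact ⟨p.snd, hadj, by omega⟩

theorem dist_le_of_mem_support {u v x : V} (p : G.Walk u v) (hp : p.length = G.dist u v)
    (hx : x ∈ p.support) : G.dist u x ≤ G.dist u v := by
  classical
  exact (dist_le (p.takeUntil x hx)).trans (hp ▸ p.length_takeUntil_le_length hx)

/-- `p` is the parent of `v` in the breadth-first tree rooted at `r`. -/
def IsParent (G : SimpleGraph V) (r p v : V) : Prop :=
  G.Adj p v ∧ G.dist r p + 1 = G.dist r v

theorem Connected.exists_isParent (hG : G.Connected) {r v : V} (hv : v ≠ r) :
    ∃ p, G.IsParent r p v := by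
  obtain ⟨k, hk⟩ := Nat.exists_eq_add_one_of_ne_zero (hG.dist_eq_zero_iff.not.mpr hv)
  obtain ⟨m, hvm, hmr⟩ := exists_adj_dist_eq_of_dist_eq_add_one hk
  exact ⟨m, hvm.symm, by rw [dist_comm, hmr, dist_comm, hk]⟩

def undominated (G : SimpleGraph V) (D : Set V) : Set V :=
  {w | ¬∃ u ∈ D, u = w ∨ G.Adj u w}

theorem dominating_iff_undominated_eq_empty {D : Set V} :
    G.Dominating D ↔ G.undominated D = ∅ := by
  simp only [Dominating, undominated, Set.eq_empty_iff_forall_notMem, Set.mem_ofPred_eq, not_not]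

theorem mem_undominated_insert {D : Set V} {a w : V} :
    w ∈ G.undominated (insert a D) ↔ ¬(a = w ∨ G.Adj a w) ∧ w ∈ G.undominated D := by
  simp [undominated]

theorem notMem_of_mem_undominated {D : Set V} {u w : V} (hw : w ∈ G.undominated D)
    (h : u = w ∨ G.Adj u w) : u ∉ D :=
  fun hu => hw ⟨u, hu, h⟩

/-- The invariant of the greedy construction: once `D` dominates, `P` and `D` witness
`γ_pr ≤ 2 ρ₃`. -/
structure PartialCertificate (G : SimpleGraph V) (P D : Set V) : Prop where
  packing3 : G.Packing3 P
  exists_isPairing : ∃ σ, G.IsPairing D σ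
  ncard_eq : D.ncard = 2 * P.ncard
  three_lt_dist : ∀ w ∈ G.undominated D, ∀ x ∈ P, 3 < G.dist x w

theorem partialCertificate_empty : G.PartialCertificate ∅ ∅ :=
  ⟨Set.pairwise_empty _, ⟨id, by simp [IsPairing]⟩, by simp, by simp⟩

theorem PartialCertificate.insert_edge [Finite V] {P D : Set V} {v a b : V}
    (h : G.PartialCertificate P D) (hv : v ∈ G.undominated D) (hab : G.Adj a b) (ha : a ∉ D)
    (hb : b ∉ D) (hfar : ∀ w ∈ G.undominated (insert a (insert b D)), 3 < G.dist v w) :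
    G.PartialCertificate (insert v P) (insert a (insert b D)) := by
  classical
  have hvP : v ∉ P := fun hvP => by simpa using h.three_lt_dist v hv v hvP
  refine ⟨?_, ?_, ?_, ?_⟩
  · refine Set.pairwise_insert.mpr ⟨h.packing3, fun x hx _ => ?_⟩
    have hxv := h.three_lt_dist v hv x hx
    exact ⟨Or.inr (dist_comm (G := G) ▸ hxv), Or.inr hxv⟩
  · obtain ⟨σ, hσ⟩ := h.exists_isPairing
    exact ⟨_, hσ.insert_insert hab ha hb⟩
  · have ha' : a ∉ insert b D := by simp [hab.ne, ha]
    rw [Set.ncard_insert_of_notMem ha', Set.ncard_insert_of_notMem hb,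
      Set.ncard_insert_of_notMem hvP, h.ncard_eq]
    ring
  · intro w hw x hx
    obtain ⟨-, hw'⟩ := mem_undominated_insert.mp hw
    obtain ⟨-, hw''⟩ := mem_undominated_insert.mp hw'
    rcases hx with rfl | hx
    exacts [hfar w hw, h.three_lt_dist w hw'' x hx]

namespace IsTree

variable (hT : T.IsTree)
include hT

theorem isParent_or_isParent_of_adj (r : V) {x y : V} (h : T.Adj x y) :
    T.IsParent r x y ∨ T.IsParent r y x :=
  (hT.dist_eq_dist_add_one_of_adj r h).symm.imp (fun h' => ⟨h, h'.symm⟩)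
    fun h' => ⟨h.symm, h'.symm⟩

/-- Both parents are the penultimate vertex of the unique path from the root. -/
theorem isParent_unique {r a b v : V} (ha : T.IsParent r a v) (hb : T.IsParent r b v) :
    a = b := by
  obtain ⟨p, hp, -⟩ := hT.connected.exists_path_of_dist r v
  have key : ∀ a, T.IsParent r a v → a = p.penultimate := fun a ha => by
    obtain ⟨q, hq, hql⟩ := hT.connected.exists_path_of_dist r a
    have hv : v ∉ q.support := fun hv => by
      have := dist_le_of_mem_support q hql hv
      have := ha.2
      omega
    exact hT.isAcyclic.eq_penultimate_of_adj_end hp ha.1.symm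
      (hT.isAcyclic.mem_support_of_ne_mem_support_of_adj_of_isPath hp hq ha.1.symm hv)
  exact (key a ha).trans (key b hb).symm

/-- If a geodesic from `v` to `w` starts with the child `c` of `v`, then `w` lies in the subtree
of `c`, so its depth is that of `c` plus its distance to `c`. -/
theorem dist_root_eq_of_isParent {r v c w : V} (hc : T.IsParent r v c)
    (h : T.dist c w + 1 = T.dist v w) : T.dist r w = T.dist r c + T.dist c w := by
  induction hk : T.dist c w generalizing v c with
  | zero => rw [hT.connected.dist_eq_zero_iff.mp hk, add_zero]
  | succ k ih =>
    obtain ⟨m, hcm, hmw⟩ := exists_adj_dist_eq_of_dist_eq_add_one hk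
    rcases hT.isParent_or_isParent_of_adj r hcm with hm | hm
    · rw [ih hm (by omega) hmw, ← hm.2]
      ring
    · obtain rfl := hT.isParent_unique hm hc
      omega

theorem exists_isParent_dist_add_one {r x w : V}
    (h : T.dist r w < T.dist r x + T.dist x w) :
    ∃ p, T.IsParent r p x ∧ T.dist p w + 1 = T.dist x w := by
  have hxw : T.dist x w ≠ 0 := fun h0 => by
    obtain rfl := hT.connected.dist_eq_zero_iff.mp h0
    omega
  obtain ⟨k, hk⟩ := Nat.exists_eq_add_one_of_ne_zero hxw
  obtain ⟨m, hxm, hmw⟩ := exists_adj_dist_eq_of_dist_eq_add_one hk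
  rcases hT.isParent_or_isParent_of_adj r hxm with hm | hm
  · have := hT.dist_root_eq_of_isParent (w := w) hm (by omega)
    have := hm.2
    omega
  · exact ⟨m, hm, by omega⟩

theorem three_lt_dist_of_isParent {r p v w : V} (hpv : T.IsParent r p v)
    (hw : T.dist r w ≤ T.dist r v) (hp : ¬(p = w ∨ T.Adj p w))
    (hg : ∀ g, T.IsParent r g p → ¬(g = w ∨ T.Adj g w)) : 3 < T.dist v w := by
  have hc := hT.connected
  have hvw : v ≠ w := by
    rintro rfl
    exact hp (Or.inr hpv.1)
  obtain ⟨p', hp'v, hp'w⟩ := hT.exists_isParent_dist_add_one (r := r) (x := v) (w := w)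
    (by have := hc.pos_dist_of_ne hvw; omega)
  obtain rfl := hT.isParent_unique hp'v hpv
  have hpw : 1 < T.dist p' w :=
    hc.one_lt_dist_of_ne_of_not_adj (fun h => hp (Or.inl h)) fun h => hp (Or.inr h)
  by_contra! hvw3
  obtain ⟨g, hgp, hgw⟩ := hT.exists_isParent_dist_add_one (r := r) (x := p') (w := w)
    (by have := hpv.2; omega)
  exact hg g hgp (Or.inr (dist_eq_one_iff_adj.mp (by omega)))

theorem exists_adj_three_lt_dist {r b v : V} (hrb : T.Adj r b) {D : Set V}
    (hv : v ∈ T.undominated D) (hmax : ∀ w ∈ T.undominated D, T.dist r w ≤ T.dist r v) :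
    ∃ α β, T.Adj α β ∧ α ∉ D ∧ β ∉ D ∧ (α = v ∨ T.Adj α v) ∧
      ∀ w ∈ T.undominated (insert α (insert β D)), 3 < T.dist v w := by
  by_cases hvr : v = r
  · subst hvr
    refine ⟨v, b, hrb, notMem_of_mem_undominated hv (Or.inl rfl),
      notMem_of_mem_undominated hv (Or.inr hrb.symm), Or.inl rfl, fun w hw => ?_⟩
    obtain ⟨hvw, -, hw⟩ := by simpa only [mem_undominated_insert] using hw
    have := hmax w hw
    rw [dist_self, Nat.le_zero, hT.connected.dist_eq_zero_iff] at this
    exact absurd (Or.inl this) hvw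
  obtain ⟨p, hp⟩ := hT.connected.exists_isParent hvr
  have hpD : p ∉ D := notMem_of_mem_undominated hv (Or.inr hp.1)
  by_cases hfree : ∃ g, T.IsParent r g p ∧ g ∉ D
  · obtain ⟨g, hg, hgD⟩ := hfree
    refine ⟨p, g, hg.1.symm, hpD, hgD, Or.inr hp.1, fun w hw => ?_⟩
    obtain ⟨hpw, hgw, hw⟩ := by simpa only [mem_undominated_insert] using hw
    exact hT.three_lt_dist_of_isParent hp (hmax w hw) hpw
      fun g' hg' => hT.isParent_unique hg' hg ▸ hgw
  · simp only [not_exists, not_and, not_not] at hfree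
    refine ⟨v, p, hp.1.symm, notMem_of_mem_undominated hv (Or.inl rfl), hpD, Or.inl rfl,
      fun w hw => ?_⟩
    obtain ⟨-, hpw, hw⟩ := by simpa only [mem_undominated_insert] using hw
    exact hT.three_lt_dist_of_isParent hp (hmax w hw) hpw
      fun g hg hgw => notMem_of_mem_undominated hw hgw (hfree g hg)

theorem exists_partialCertificate_ssubset [Finite V] {r b : V} (hrb : T.Adj r b) {P D : Set V}
    (h : T.PartialCertificate P D) (hne : (T.undominated D).Nonempty) :
    ∃ P' D', T.PartialCertificate P' D' ∧ T.undominated D' ⊂ T.undominated D := by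
  obtain ⟨v, hv, hmax⟩ := Set.exists_max_image _ (T.dist r) (Set.toFinite _) hne
  obtain ⟨α, β, hαβ, hα, hβ, hαv, hfar⟩ := hT.exists_adj_three_lt_dist hrb hv hmax
  refine ⟨_, _, h.insert_edge hv hαβ hα hβ hfar, fun w hw => ?_, fun hsub => ?_⟩
  · exact (mem_undominated_insert.mp (mem_undominated_insert.mp hw).2).2
  · exact (mem_undominated_insert.mp (hsub hv)).1 hαv

theorem exists_packing3_pairedDominating [Finite V] {a b : V} (hab : T.Adj a b) :
    ∃ P D, T.Packing3 P ∧ T.PairedDominating D ∧ D.ncard = 2 * P.ncard := by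
  obtain ⟨⟨P, D⟩, h, hmin⟩ := Set.exists_min_image
    {PD : Set V × Set V | T.PartialCertificate PD.1 PD.2} (fun PD => (T.undominated PD.2).ncard)
    (Set.toFinite _) ⟨(∅, ∅), partialCertificate_empty⟩
  have hdom : T.undominated D = ∅ := by
    by_contra hne
    obtain ⟨P', D', h', hlt⟩ :=
      hT.exists_partialCertificate_ssubset hab h (Set.nonempty_iff_ne_empty.mpr hne)
    exact (Set.ncard_lt_ncard hlt).not_ge (hmin (P', D') h')
  exact ⟨P, D, h.packing3, ⟨dominating_iff_undominated_eq_empty.mpr hdom,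
    exists_isPerfectMatching_induce_iff.mpr h.exists_isPairing⟩, h.ncard_eq⟩

end IsTree

end SimpleGraph

theorem stmt9 {V : Type*} [Fintype V] (T : SimpleGraph V) (hT : T.IsTree)
    (he : ∃ a b, T.Adj a b) :
    T.pairedDomNum = 2 * T.packNum3 := by
  obtain ⟨a, b, hab⟩ := he
  obtain ⟨P₀, D₀, hP₀, hD₀, hcard₀⟩ := hT.exists_packing3_pairedDominating hab
  have hbdd : BddAbove {n | ∃ P : Set V, T.Packing3 P ∧ P.ncard = n} :=
    ⟨Nat.card V, by rintro _ ⟨P, -, rfl⟩; exact Set.ncard_le_card P⟩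
  obtain ⟨D, hD, hD_min⟩ := Nat.sInf_mem (⟨_, D₀, hD₀, rfl⟩ :
    {n | ∃ D : Set V, T.PairedDominating D ∧ D.ncard = n}.Nonempty)
  obtain ⟨P, hP, hP_max⟩ := Nat.sSup_mem (⟨_, P₀, hP₀, rfl⟩ :
    {n | ∃ P : Set V, T.Packing3 P ∧ P.ncard = n}.Nonempty) hbdd
  have hlower : 2 * P.ncard ≤ D.ncard := hP.two_mul_ncard_le hD (Set.toFinite D)
  have hupper : T.pairedDomNum ≤ D₀.ncard := Nat.sInf_le ⟨D₀, hD₀, rfl⟩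
  have hP₀_le : P₀.ncard ≤ T.packNum3 := le_csSup hbdd ⟨P₀, hP₀, rfl⟩
  have hD_eq : D.ncard = T.pairedDomNum := hD_min
  have hP_eq : P.ncard = T.packNum3 := hP_max
  omega
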